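/- arXiv:2402.01257 — 2 statements merged into one kernel-verified Lean document; each statement's English description precedes it below -/
import Mathlib

section
/- Let ζ_i be a unit complex number and ζ_j (j ≠ i, 0 ≤ j < d) unit vectors with |ζ_i^⊥·ζ_j| > 0 for all j. Along a line of normal ζ_i, the number of points z + x ζ_i^⊥, x ∈ [0,α], lying on any of the grids G(ζ_j, γ_j), divided by α, converges as α → +∞ to the sum over j ≠ i of |ζ_i^⊥·ζ_j|. -/
/-!
The line `x ↦ z + x ζᵢ^⊥` meets the grid `G(ζⱼ, γⱼ)` exactly where the affine function
`x ↦ (ζᵢ^⊥·ζⱼ) x + (z·ζⱼ - γⱼ)` takes an integer value, which happens `|ζᵢ^⊥·ζⱼ| α + O(1)` times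
for `x ∈ [0, α]`. The line itself lies on the grid `G(ζᵢ, γᵢ)`, so regularity forbids a crossing
point from lying on two grids `j ≠ k` besides `i`: the crossings with the various grids are
disjoint and their counts add up.
-/

open Set Filter

noncomputable section

/-- Scalar product on `ℂ ≅ ℝ²`: `z·w := Re(z * conj w)`. -/
def dotp (z w : ℂ) : ℝ := (z * (starRingEnd ℂ) w).re

/-- Orthogonal vector: `ζ^⊥ := iζ`. -/
def perp (ζ : ℂ) : ℂ := Complex.I * ζ

/-- `z` lies on the grid `G(ζᵢ, γᵢ)`. -/
def onGrid {d : ℕ} (ζ : Fin d → ℂ) (γ : Fin d → ℝ) (i : Fin d) (z : ℂ) : Prop :=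
  ∃ m : ℤ, dotp z (ζ i) - γ i = m

/-- The multigrid is regular: no point lies on three distinct grid lines
(equivalently, on grids of three distinct directions). -/
def Regular {d : ℕ} (ζ : Fin d → ℂ) (γ : Fin d → ℝ) : Prop :=
  ∀ z : ℂ, Set.ncard {i : Fin d | onGrid ζ γ i z} ≤ 2

open Topology

def intCrossings (c b α : ℝ) : Set ℝ := {x | x ∈ Icc 0 α ∧ ∃ m : ℤ, c * x + b = m}

section intCrossings

variable {c b α : ℝ}

lemma intCrossings_neg : intCrossings (-c) (-b) α = intCrossings c b α := by
  ext x
  refine and_congr_right fun _ => ⟨fun ⟨m, hm⟩ => ⟨-m, ?_⟩, fun ⟨m, hm⟩ => ⟨-m, ?_⟩⟩ <;>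
    push_cast <;> linarith

lemma intCrossings_eq_image (hc : 0 < c) :
    intCrossings c b α =
      (fun m : ℤ => (m - b) / c) '' (Finset.Icc ⌈b⌉ ⌊c * α + b⌋ : Set ℤ) := by
  ext x
  simp only [intCrossings, mem_ofPred_eq, mem_Icc, mem_image, Finset.coe_Icc]
  constructor
  · rintro ⟨⟨hx0, hxα⟩, m, hm⟩
    refine ⟨m, ⟨Int.ceil_le.2 (by nlinarith), Int.le_floor.2 (by nlinarith)⟩, ?_⟩
    field_simp
    linarith
  · rintro ⟨m, ⟨hbm, hmα⟩, rfl⟩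
    have hbm : b ≤ m := Int.ceil_le.1 hbm
    have hmα : (m : ℝ) ≤ c * α + b := Int.le_floor.1 hmα
    refine ⟨⟨div_nonneg (by linarith) hc.le, (div_le_iff₀ hc).2 (by linarith)⟩, m, ?_⟩
    field_simp
    ring

lemma intCrossings_finite (hc : c ≠ 0) : (intCrossings c b α).Finite := by
  wlog hc : 0 < c generalizing c b
  · have hneg : 0 < -c := neg_pos.2 (lt_of_le_of_ne (not_lt.1 hc) ‹c ≠ 0›)
    rw [← intCrossings_neg]
    exact this hneg.ne' hneg
  rw [intCrossings_eq_image hc]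
  exact (Finset.Icc _ _).finite_toSet.image _

lemma ncard_intCrossings (hc : 0 < c) :
    (intCrossings c b α).ncard = (⌊c * α + b⌋ + 1 - ⌈b⌉).toNat := by
  have hinj : Function.Injective fun m : ℤ => (m - b) / c := fun m n h => by
    simpa [div_left_inj' hc.ne'] using h
  rw [intCrossings_eq_image hc, ncard_image_of_injective _ hinj, ncard_coe_finset,
    Int.card_Icc]

lemma abs_ncard_intCrossings_sub_le (hc : c ≠ 0) (hα : 0 ≤ α) :
    |((intCrossings c b α).ncard : ℝ) - |c| * α| ≤ 1 := by
  wlog hc : 0 < c generalizing c b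
  · have hneg : 0 < -c := neg_pos.2 (lt_of_le_of_ne (not_lt.1 hc) ‹c ≠ 0›)
    rw [← intCrossings_neg, ← abs_neg c]
    exact this hneg.ne' hneg
  have hcount : 0 ≤ ⌊c * α + b⌋ + 1 - ⌈b⌉ := by
    have := (Int.ceil_le_ceil (by nlinarith : b ≤ c * α + b)).trans
      (Int.ceil_le_floor_add_one (c * α + b))
    omega
  have hcast : ((intCrossings c b α).ncard : ℝ) = ⌊c * α + b⌋ + 1 - ⌈b⌉ := by
    rw [ncard_intCrossings hc]
    exact_mod_cast Int.toNat_of_nonneg hcount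
  rw [hcast, abs_of_pos hc, abs_le]
  constructor <;> linarith [Int.floor_le (c * α + b), Int.lt_floor_add_one (c * α + b),
    Int.le_ceil b, Int.ceil_lt_add_one b]

lemma tendsto_div_atTop_of_abs_sub_mul_le {f : ℝ → ℝ} {c C : ℝ}
    (h : ∀ᶠ α in atTop, |f α - c * α| ≤ C) :
    Tendsto (fun α => f α / α) atTop (𝓝 c) := by
  have herr : Tendsto (fun α => (f α - c * α) / α) atTop (𝓝 0) := by
    refine squeeze_zero_norm' ?_ ((tendsto_const_nhds (x := C)).div_atTop tendsto_id)
    filter_upwards [h, eventually_gt_atTop 0] with α hα hpos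
    rw [norm_div, Real.norm_eq_abs, Real.norm_eq_abs, abs_of_pos hpos]
    exact div_le_div_of_nonneg_right hα hpos.le
  refine (by simpa using herr.const_add c : Tendsto _ _ _).congr' ?_
  filter_upwards [eventually_gt_atTop 0] with α hpos
  field_simp
  ring

lemma tendsto_ncard_intCrossings_div (hc : c ≠ 0) :
    Tendsto (fun α => ((intCrossings c b α).ncard : ℝ) / α) atTop (𝓝 |c|) :=
  tendsto_div_atTop_of_abs_sub_mul_le <| (eventually_ge_atTop 0).mono fun _ hα =>
    abs_ncard_intCrossings_sub_le hc hα

end intCrossings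

lemma dotp_add_smul (z w ζ : ℂ) (x : ℝ) : dotp (z + x • w) ζ = dotp z ζ + x * dotp w ζ := by
  simp only [dotp, add_mul, Complex.add_re, Complex.real_smul, Complex.mul_re, Complex.mul_im,
    Complex.ofReal_re, Complex.ofReal_im]
  ring

lemma dotp_perp_self (ζ : ℂ) : dotp (perp ζ) ζ = 0 := by
  simp only [dotp, perp, Complex.mul_re, Complex.mul_im, Complex.I_re, Complex.I_im,
    Complex.conj_re, Complex.conj_im]
  ring

section grid

variable {d : ℕ} {ζ : Fin d → ℂ} {γ : Fin d → ℝ}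

lemma onGrid_add_smul_iff (j : Fin d) (z w : ℂ) (x : ℝ) :
    onGrid ζ γ j (z + x • w) ↔ ∃ m : ℤ, dotp w (ζ j) * x + (dotp z (ζ j) - γ j) = m := by
  rw [onGrid, dotp_add_smul]
  ring_nf

lemma onGrid_add_smul_perp_self {i : Fin d} {z : ℂ} (hz : onGrid ζ γ i z) (x : ℝ) :
    onGrid ζ γ i (z + x • perp (ζ i)) := by
  rw [onGrid_add_smul_iff, dotp_perp_self, zero_mul, zero_add]
  exact hz

lemma setOf_onGrid_add_smul_eq_intCrossings (j : Fin d) (z w : ℂ) (α : ℝ) :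
    {x | x ∈ Icc 0 α ∧ onGrid ζ γ j (z + x • w)} =
      intCrossings (dotp w (ζ j)) (dotp z (ζ j) - γ j) α := by
  simp only [intCrossings, onGrid_add_smul_iff]

lemma Regular.eq_of_onGrid (hreg : Regular ζ γ) {i j k : Fin d} {z : ℂ} (hi : onGrid ζ γ i z)
    (hj : onGrid ζ γ j z) (hk : onGrid ζ γ k z) (hji : j ≠ i) (hki : k ≠ i) : j = k := by
  by_contra hjk
  have hsub : ({i, j, k} : Set (Fin d)) ⊆ {l | onGrid ζ γ l z} := by
    rintro l (rfl | rfl | rfl) <;> assumption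
  have hcard : ({i, j, k} : Set (Fin d)).ncard = 3 := by
    rw [ncard_insert_of_notMem (by simp [hji.symm, hki.symm]), ncard_pair hjk]
  have := (ncard_le_ncard hsub (toFinite _)).trans (hreg z)
  omega

end grid

theorem crossings_density_general (d : ℕ) (ζ : Fin d → ℂ) (γ : Fin d → ℝ) (i : Fin d) (z : ℂ)
    (hpos : ∀ j, j ≠ i → 0 < |dotp (perp (ζ i)) (ζ j)|)
    (hreg : Regular ζ γ)
    (hz : onGrid ζ γ i z) :
    Tendsto
      (fun α : ℝ =>
        (Set.ncard {x : ℝ | x ∈ Icc 0 α ∧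
            ∃ j, j ≠ i ∧ onGrid ζ γ j (z + x • perp (ζ i))} : ℝ) / α)
      atTop (nhds (∑ j ∈ Finset.univ.erase i, |dotp (perp (ζ i)) (ζ j)|)) := by
  set others := Finset.univ.erase i
  set S := fun j α => {x : ℝ | x ∈ Icc 0 α ∧ onGrid ζ γ j (z + x • perp (ζ i))}
  have hS : ∀ j α, S j α = intCrossings (dotp (perp (ζ i)) (ζ j)) (dotp z (ζ j) - γ j) α :=
    fun j α => setOf_onGrid_add_smul_eq_intCrossings j z _ α
  have hc : ∀ j ∈ others, dotp (perp (ζ i)) (ζ j) ≠ 0 := fun j hj =>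
    abs_pos.1 (hpos j (Finset.ne_of_mem_erase hj))
  have hunion : ∀ α, {x : ℝ | x ∈ Icc 0 α ∧ ∃ j, j ≠ i ∧ onGrid ζ γ j (z + x • perp (ζ i))} =
      ⋃ j ∈ (others : Set (Fin d)), S j α := by
    intro α
    ext x
    simp only [S, others, Finset.mem_coe, Finset.mem_erase, Finset.mem_univ, and_true,
      mem_iUnion, exists_prop, mem_ofPred_eq]
    tauto
  have hdisj : ∀ α, (others : Set (Fin d)).PairwiseDisjoint (S · α) := fun α j hj k hk hjk =>
    disjoint_left.2 fun x hxj hxk => hjk <| hreg.eq_of_onGrid (onGrid_add_smul_perp_self hz x)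
      hxj.2 hxk.2 (Finset.ne_of_mem_erase hj) (Finset.ne_of_mem_erase hk)
  have hlim : ∀ j ∈ others,
      Tendsto (fun α => ((S j α).ncard : ℝ) / α) atTop (𝓝 |dotp (perp (ζ i)) (ζ j)|) :=
    fun j hj => by simpa only [hS] using tendsto_ncard_intCrossings_div (hc j hj)
  refine (tendsto_finsetSum others hlim).congr fun α => ?_
  rw [hunion, (Finset.finite_toSet others).ncard_biUnion
    (fun j hj => hS j α ▸ intCrossings_finite (hc j hj)) (hdisj α), finsum_mem_coe_finset,
    Nat.cast_sum, Finset.sum_div]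

/-- Along a line of unit normal `ζᵢ`, the number of points `z + x ζᵢ^⊥`, `x ∈ [0,α]`,
lying on any of the grids `G(ζⱼ, γⱼ)` (`j ≠ i`), divided by `α`, tends as `α → ∞`
to `∑_{j ≠ i} |ζᵢ^⊥·ζⱼ|`. -/
theorem crossings_density (d : ℕ) (ζ : Fin d → ℂ) (γ : Fin d → ℝ) (i : Fin d) (z : ℂ)
    (hunit : ∀ j, ‖ζ j‖ = 1)
    (hpos : ∀ j, j ≠ i → 0 < |dotp (perp (ζ i)) (ζ j)|)
    (hreg : Regular ζ γ)
    (hz : onGrid ζ γ i z) :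
    Tendsto
      (fun α : ℝ =>
        (Set.ncard {x : ℝ | x ∈ Icc 0 α ∧
            ∃ j, j ≠ i ∧ onGrid ζ γ j (z + x • perp (ζ i))} : ℝ) / α)
      atTop (nhds (∑ j ∈ Finset.univ.erase i, |dotp (perp (ζ i)) (ζ j)|)) :=
  crossings_density_general d ζ γ i z hpos hreg hz
end
end

section
/- Let T be an edge-to-edge tiling and Δ a polygon. If for every single tile t ∈ T the rescaled corona sequence ⌢{t}_n / n converges to Δ in Hausdorff distance, then for every finite patch P of T the rescaled corona sequence ⌢P_n / n also converges to Δ; i.e., Δ is the uniform corona limit of T. -/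
/-!
The corona of a patch is the union of the coronas of its tiles, and rescaling commutes with
unions. The Hausdorff distance from a union of nonempty sets to a bounded set is at most the
maximum, hence the sum, of the individual distances, so the distance for `P` is squeezed by a
finite sum of sequences tending to `0`.
-/

open Filter Metric

noncomputable section

/-- The corona sequence of a set of tiles `P` for the adjacency relation `adj`:
`P₀ = P` and `P_{n+1} = Pₙ ∪ {t : t adjacent to some tile of Pₙ}`. -/
def coronaSeq {ι : Type*} (adj : ι → ι → Prop) (P : Set ι) : ℕ → Set ι
  | 0 => P
  | n + 1 => coronaSeq adj P n ∪ {t | ∃ t' ∈ coronaSeq adj P n, adj t t'}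

/-- The region of the plane covered by the tiles of a patch. -/
def region {ι : Type*} (tile : ι → Set ℂ) (P : Set ι) : Set ℂ := ⋃ t ∈ P, tile t

open Bornology Set

section Hausdorff

variable {α : Type*} [PseudoMetricSpace α]

theorem Bornology.IsBounded.of_hausdorffEDist_ne_top {s t : Set α}
    (fin : hausdorffEDist s t ≠ ⊤) (ht : IsBounded t) : IsBounded s := by
  refine (ht.cthickening (δ := hausdorffDist s t)).subset fun x hx => ?_
  rw [Metric.cthickening, hausdorffDist, ENNReal.ofReal_toReal fin]
  exact infEDist_le_hausdorffEDist_of_mem hx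

theorem hausdorffDist_union_le {s₁ s₂ t : Set α} (hs₁ : s₁.Nonempty) (hs₂ : s₂.Nonempty)
    (ht : IsBounded t) :
    hausdorffDist (s₁ ∪ s₂) t ≤ max (hausdorffDist s₁ t) (hausdorffDist s₂ t) := by
  have hmax_nonneg : 0 ≤ max (hausdorffDist s₁ t) (hausdorffDist s₂ t) :=
    le_max_of_le_left hausdorffDist_nonneg
  by_cases hfin : hausdorffEDist (s₁ ∪ s₂) t = ⊤
  -- junk value: `hausdorffDist` is `0` when the extended distance is infinite
  · rwa [hausdorffDist, hfin, ENNReal.toReal_top]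
  have hbdd := ht.of_hausdorffEDist_ne_top hfin
  have htne := nonempty_of_hausdorffEDist_ne_top (hs₁.mono subset_union_left) hfin
  have hfin₁ : hausdorffEDist s₁ t ≠ ⊤ := hausdorffEDist_ne_top_of_nonempty_of_bounded
    hs₁ htne (hbdd.subset subset_union_left) ht
  have hfin₂ : hausdorffEDist s₂ t ≠ ⊤ := hausdorffEDist_ne_top_of_nonempty_of_bounded
    hs₂ htne (hbdd.subset subset_union_right) ht
  refine hausdorffDist_le_of_infDist hmax_nonneg ?_ fun x hx => ?_
  · rintro x (hx | hx)
    · exact (infDist_le_hausdorffDist_of_mem hx hfin₁).trans (le_max_left _ _)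
    · exact (infDist_le_hausdorffDist_of_mem hx hfin₂).trans (le_max_right _ _)
  · calc infDist x (s₁ ∪ s₂) ≤ infDist x s₁ := infDist_le_infDist_of_subset subset_union_left hs₁
      _ ≤ hausdorffDist t s₁ :=
        infDist_le_hausdorffDist_of_mem hx (by rwa [hausdorffEDist_comm])
      _ = hausdorffDist s₁ t := hausdorffDist_comm
      _ ≤ _ := le_max_left _ _

theorem hausdorffDist_biUnion_le_sum {ι : Type*} {I : Finset ι} (hI : I.Nonempty)
    {s : ι → Set α} (hs : ∀ i ∈ I, (s i).Nonempty) {t : Set α} (ht : IsBounded t) :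
    hausdorffDist (⋃ i ∈ I, s i) t ≤ ∑ i ∈ I, hausdorffDist (s i) t := by
  induction hI using Finset.Nonempty.cons_induction with
  | singleton i => simp
  | cons i I hi hI ih =>
    classical
    have hsI : ∀ j ∈ I, (s j).Nonempty := fun j hj => hs j (Finset.mem_cons_of_mem hj)
    obtain ⟨j, hj⟩ := hI
    have hUne : (⋃ j ∈ I, s j).Nonempty := (hsI j hj).mono (subset_biUnion_of_mem hj)
    rw [Finset.cons_eq_insert, Finset.set_biUnion_insert, Finset.sum_insert hi]
    refine (hausdorffDist_union_le (hs i (Finset.mem_cons_self i I)) hUne ht).trans ?_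
    have := Finset.sum_nonneg fun j (_ : j ∈ I) => hausdorffDist_nonneg (s := s j) (t := t)
    exact max_le (le_add_of_nonneg_right this)
      ((ih hsI).trans (le_add_of_nonneg_left hausdorffDist_nonneg))

end Hausdorff

section Corona

variable {ι : Type*} (adj : ι → ι → Prop)

theorem coronaSeq_eq_biUnion (P : Set ι) (n : ℕ) :
    coronaSeq adj P n = ⋃ t ∈ P, coronaSeq adj {t} n := by
  induction n with
  | zero => simp [coronaSeq]
  | succ n ih =>
    ext x
    simp only [coronaSeq, ih, mem_union, mem_iUnion, mem_ofPred_eq, exists_prop]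
    aesop

theorem subset_coronaSeq (P : Set ι) : ∀ n, P ⊆ coronaSeq adj P n
  | 0 => subset_rfl
  | n + 1 => (subset_coronaSeq P n).trans subset_union_left

theorem region_biUnion (tile : ι → Set ℂ) (P : Set ι) (S : ι → Set ι) :
    region tile (⋃ t ∈ P, S t) = ⋃ t ∈ P, region tile (S t) := by
  simp only [region, biUnion_iUnion]

end Corona

theorem uniform_corona_limit_of_single_tiles_general {ι : Type*}
    (adj : ι → ι → Prop)
    (tile : ι → Set ℂ)
    (htile : ∀ t, IsCompact (tile t) ∧ (tile t).Nonempty)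
    (Δ : Set ℂ) (hΔ : IsCompact Δ)
    (hsingle : ∀ t : ι,
      Tendsto (fun n : ℕ =>
          hausdorffDist ((fun z : ℂ => (n : ℂ)⁻¹ * z) '' region tile (coronaSeq adj {t} n)) Δ)
        atTop (nhds 0)) :
    ∀ P : Set ι, P.Finite → P.Nonempty →
      Tendsto (fun n : ℕ =>
          hausdorffDist ((fun z : ℂ => (n : ℂ)⁻¹ * z) '' region tile (coronaSeq adj P n)) Δ)
        atTop (nhds 0) := by
  intro P hP hPne
  set scaled : ℕ → Set ι → Set ℂ :=
    fun n Q => (fun z : ℂ => (n : ℂ)⁻¹ * z) '' region tile (coronaSeq adj Q n)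
  have hscaled : ∀ n, scaled n P = ⋃ t ∈ hP.toFinset, scaled n {t} := fun n => by
    simp only [scaled, coronaSeq_eq_biUnion adj P, region_biUnion, image_iUnion₂,
      Finite.mem_toFinset]
  have hne : ∀ n t, (scaled n {t}).Nonempty := fun n t =>
    ((htile t).2.mono (subset_biUnion_of_mem (subset_coronaSeq adj {t} n rfl))).image _
  have hbound : ∀ n,
      hausdorffDist (scaled n P) Δ ≤ ∑ t ∈ hP.toFinset, hausdorffDist (scaled n {t}) Δ := fun n =>
    hscaled n ▸ hausdorffDist_biUnion_le_sum (by simpa) (fun t _ => hne n t) hΔ.isBounded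
  exact squeeze_zero (fun _ => hausdorffDist_nonneg) hbound
    (by simpa using tendsto_finsetSum hP.toFinset fun t _ => hsingle t)

/-- If for every single tile `t` the rescaled coronas `⌢{t}ₙ/n` converge to `Δ` in
Hausdorff distance, then for every nonempty finite patch `P` the rescaled coronas
`⌢Pₙ/n` converge to `Δ` as well: `Δ` is the uniform corona limit of the tiling. -/
theorem uniform_corona_limit_of_single_tiles {ι : Type*}
    (adj : ι → ι → Prop) (hsymm : ∀ a b, adj a b → adj b a)
    (tile : ι → Set ℂ)
    (htile : ∀ t, IsCompact (tile t) ∧ (tile t).Nonempty)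
    (Δ : Set ℂ) (hΔ : IsCompact Δ) (hΔne : Δ.Nonempty)
    (hsingle : ∀ t : ι,
      Tendsto (fun n : ℕ =>
          hausdorffDist ((fun z : ℂ => (n : ℂ)⁻¹ * z) '' region tile (coronaSeq adj {t} n)) Δ)
        atTop (nhds 0)) :
    ∀ P : Set ι, P.Finite → P.Nonempty →
      Tendsto (fun n : ℕ =>
          hausdorffDist ((fun z : ℂ => (n : ℂ)⁻¹ * z) '' region tile (coronaSeq adj P n)) Δ)
        atTop (nhds 0) :=
  uniform_corona_limit_of_single_tiles_general adj tile htile Δ hΔ hsingle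
end
end
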